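/- Let 0 < r_min ≤ r_max, set R = r_max/r_min, a = √((r_min² + r_max²)/2), and c_n = (2n+1)!!/(2n)!! = (2n+1)!/(4ⁿ·(n!)²). For d ∈ ℕ define the polynomial approximation f_d(s) = a^{−3} Σ_{n=0}^{d} c_n (1 − s/a²)ⁿ. Then for every r with r_min ≤ r ≤ r_max: |f_d(r²) − r^{−3}| ≤ 2^{3/2} · r_max^{−3} · c_{d+1} · ((R² + 1)/2)^{d + 5/2} · exp(−2(d+1)/(R² + 1)). -/

import Mathlib

/-!
Put `a² = (r_min² + r_max²)/2` and `x = 1 - r²/a²`, so that `r⁻³ = a⁻³ (1 - x)^{-3/2}` and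
`|x| ≤ q := 1 - r_min²/a² = (R² - 1)/(R² + 1)`. The `n`-th derivative of `(1 - t)^{-3/2}` is
`cₙ n! (1 - t)^{-3/2-n}`, so `a³ f_d(r²)` is its Taylor polynomial of degree `d` at `0` evaluated
at `x`, and the Lagrange remainder is at most `c_{d+1} q^{d+1} (1 - q)^{-(d+5/2)}`. It remains to
use `1 - q = 2/(R² + 1)`, `q ≤ e^{-(1-q)}` and `a⁻³ ≤ 2^{3/2} r_max⁻³`.
-/

/-- The binomial coefficients `cₙ = (2n+1)!!/(2n)!! = (2n+1)!/(4ⁿ (n!)²)` of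
the power series of `(1-x)^{-3/2}`. -/
noncomputable def binCoef (n : ℕ) : ℝ :=
  (Nat.factorial (2 * n + 1) : ℝ) / (4 ^ n * (Nat.factorial n : ℝ) ^ 2)

open Finset Set Nat

lemma binCoef_pos (n : ℕ) : 0 < binCoef n := by
  unfold binCoef; positivity

lemma binCoef_succ_mul_factorial (n : ℕ) :
    binCoef (n + 1) * (n + 1)! = binCoef n * n ! * (n + 3 / 2) := by
  unfold binCoef
  rw [show 2 * (n + 1) + 1 = 2 * n + 1 + 1 + 1 by ring, factorial_succ (2 * n + 1 + 1),
    factorial_succ (2 * n + 1), factorial_succ n]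
  push_cast
  field_simp
  ring

lemma binCoef_mul_factorial (n : ℕ) :
    binCoef n * n ! = (-1) ^ n * (descPochhammer ℝ n).eval (-3 / 2) := by
  induction n with
  | zero => simp [binCoef]
  | succ n ih =>
    rw [binCoef_succ_mul_factorial, ih, descPochhammer_succ_right, Polynomial.eval_mul]
    simp only [Polynomial.eval_sub, Polynomial.eval_X, Polynomial.eval_natCast]
    ring

lemma iteratedDeriv_one_sub_rpow (p t : ℝ) (n : ℕ) :
    iteratedDeriv n (fun s => (1 - s) ^ p) t =
      (-1) ^ n * (descPochhammer ℝ n).eval p * (1 - t) ^ (p - n) := by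
  rw [iteratedDeriv_comp_const_sub n (fun s : ℝ => s ^ p), iteratedDeriv_eq_iterate]
  dsimp only
  rw [Real.iter_deriv_rpow_const, smul_eq_mul, mul_assoc]

lemma iteratedDeriv_one_sub_rpow_neg_three_halves (n : ℕ) (t : ℝ) :
    iteratedDeriv n (fun s => (1 - s) ^ (-3 / 2 : ℝ)) t =
      binCoef n * n ! * (1 - t) ^ (-3 / 2 - n : ℝ) := by
  rw [iteratedDeriv_one_sub_rpow, binCoef_mul_factorial]

lemma taylorWithinEval_one_sub_rpow_neg_three_halves {x : ℝ} (hx : x ≠ 0) (d : ℕ) :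
    taylorWithinEval (fun s => (1 - s) ^ (-3 / 2 : ℝ)) d (uIcc 0 x) 0 x =
      ∑ n ∈ range (d + 1), binCoef n * x ^ n := by
  have hg : ContDiffAt ℝ ⊤ (fun s : ℝ => (1 - s) ^ (-3 / 2 : ℝ)) 0 :=
    (contDiffAt_const.sub contDiffAt_id).rpow_const_of_ne (by norm_num)
  rw [taylor_within_apply]
  refine sum_congr rfl fun n _ => ?_
  rw [iteratedDerivWithin_eq_iteratedDeriv (uniqueDiffOn_uIcc hx.symm) (hg.of_le le_top)
    left_mem_uIcc, iteratedDeriv_one_sub_rpow_neg_three_halves]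
  simp [field]

lemma abs_sum_binCoef_mul_pow_sub_le {x q : ℝ} (hxq : |x| ≤ q) (hq : q < 1) (d : ℕ) :
    |∑ n ∈ range (d + 1), binCoef n * x ^ n - (1 - x) ^ (-3 / 2 : ℝ)| ≤
      binCoef (d + 1) * q ^ (d + 1) * (1 - q) ^ (-(d + 5 / 2) : ℝ) := by
  set g : ℝ → ℝ := fun s => (1 - s) ^ (-3 / 2 : ℝ)
  have hq0 : 0 ≤ q := (abs_nonneg x).trans hxq
  have hbound : 0 ≤ binCoef (d + 1) * q ^ (d + 1) * (1 - q) ^ (-(d + 5 / 2) : ℝ) := by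
    have := binCoef_pos (d + 1)
    positivity
  rcases eq_or_ne x 0 with rfl | hx
  · simpa [sum_range_succ', binCoef] using hbound
  have hξq : ∀ t ∈ uIcc 0 x, t ≤ q := fun t ht => by
    have := abs_sub_left_of_mem_uIcc ht
    rw [sub_zero, sub_zero] at this
    exact (le_abs_self t).trans (this.trans hxq)
  have hg : ∀ t ∈ uIcc 0 x, ContDiffAt ℝ (d + 1) g t := fun t ht =>
    (contDiffAt_const.sub contDiffAt_id).rpow_const_of_ne (sub_pos.2 ((hξq t ht).trans_lt hq)).ne'
  obtain ⟨ξ, hξ, hrem⟩ := taylor_mean_remainder_lagrange_iteratedDeriv hx.symm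
    fun t ht => (hg t ht).contDiffWithinAt
  have hξ' : ξ ∈ uIcc 0 x := uIoo_subset_uIcc_self hξ
  have hexp : (-3 / 2 - ((d + 1 : ℕ) : ℝ)) = -(d + 5 / 2) := by push_cast; ring
  rw [taylorWithinEval_one_sub_rpow_neg_three_halves hx, iteratedDeriv_one_sub_rpow_neg_three_halves,
    hexp, sub_zero] at hrem
  have hrem' : ∑ n ∈ range (d + 1), binCoef n * x ^ n - g x =
      -(binCoef (d + 1) * (1 - ξ) ^ (-(d + 5 / 2) : ℝ) * x ^ (d + 1)) := by
    rw [← neg_sub, hrem]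
    field_simp
  rw [hrem', abs_neg, abs_mul, abs_mul, abs_pow, abs_of_pos (binCoef_pos _),
    abs_of_pos (Real.rpow_pos_of_pos (by linarith [hξq ξ hξ']) _), mul_right_comm]
  have hξ1 : 1 - q ≤ 1 - ξ := by linarith [hξq ξ hξ']
  have := binCoef_pos (d + 1)
  exact mul_le_mul (by gcongr) (Real.rpow_le_rpow_of_nonpos (by linarith) hξ1 (by linarith))
    (Real.rpow_nonneg (by linarith) _) (by positivity)

lemma abs_one_sub_div_midpoint_le {m s M : ℝ} (hm : 0 < m) (hms : m ≤ s) (hsM : s ≤ M) :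
    |1 - s / ((m + M) / 2)| ≤ 1 - m / ((m + M) / 2) := by
  have hmid : 0 < (m + M) / 2 := by linarith
  have hsum : s / ((m + M) / 2) + m / ((m + M) / 2) ≤ 2 := by
    rw [← add_div, div_le_iff₀ hmid]; linarith
  have : m / ((m + M) / 2) ≤ s / ((m + M) / 2) := by gcongr
  rw [abs_le]; constructor <;> linarith

lemma pow_le_exp_neg_mul_one_sub {q : ℝ} (hq : 0 ≤ q) (n : ℕ) :
    q ^ n ≤ Real.exp (-(n * (1 - q))) := by
  calc q ^ n ≤ Real.exp (q - 1) ^ n := by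
        gcongr; linarith [Real.add_one_le_exp (q - 1)]
    _ = Real.exp (-(n * (1 - q))) := by rw [← Real.exp_nat_mul]; ring_nf

lemma inv_sqrt_pow_three {u : ℝ} (hu : 0 ≤ u) : (√u)⁻¹ ^ 3 = u ^ (-3 / 2 : ℝ) := by
  rw [Real.sqrt_eq_rpow, ← Real.rpow_neg hu, ← Real.rpow_natCast, ← Real.rpow_mul hu]
  norm_num

lemma inv_pow_three_eq_inv_sqrt_pow_three_mul_rpow {r A : ℝ} (hr : 0 ≤ r) (hA : 0 < A) :
    (r ^ 3)⁻¹ = (√A)⁻¹ ^ 3 * (r ^ 2 / A) ^ (-3 / 2 : ℝ) := by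
  rw [Real.div_rpow (sq_nonneg r) hA.le, ← inv_sqrt_pow_three (sq_nonneg r),
    ← inv_sqrt_pow_three hA.le, Real.sqrt_sq hr]
  field_simp

lemma inv_sqrt_pow_three_le {A b : ℝ} (hb : 0 < b) (h : b ^ 2 ≤ 2 * A) :
    (√A)⁻¹ ^ 3 ≤ 2 ^ (3 / 2 : ℝ) * (b ^ 3)⁻¹ := by
  have hA : 0 < √A := Real.sqrt_pos.2 (by nlinarith)
  have hb_le : b ≤ √2 * √A := by
    rw [← Real.sqrt_mul zero_le_two, Real.le_sqrt hb.le (by nlinarith)]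
    exact h
  calc (√A)⁻¹ ^ 3 ≤ (√2 / b) ^ 3 := by
        gcongr
        rw [inv_eq_one_div, div_le_div_iff₀ hA hb]
        linarith
    _ = 2 ^ (3 / 2 : ℝ) * (b ^ 3)⁻¹ := by
        rw [div_pow, Real.sqrt_eq_rpow, ← Real.rpow_natCast, ← Real.rpow_mul zero_le_two]
        norm_num [div_eq_mul_inv]

theorem stmt13 (rmin rmax : ℝ) (h0 : 0 < rmin) (hle : rmin ≤ rmax)
    (d : ℕ) (r : ℝ) (hr1 : rmin ≤ r) (hr2 : r ≤ rmax) :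
    |(Real.sqrt ((rmin ^ 2 + rmax ^ 2) / 2))⁻¹ ^ 3 *
        (∑ n ∈ Finset.range (d + 1),
          binCoef n * (1 - r ^ 2 / ((rmin ^ 2 + rmax ^ 2) / 2)) ^ n) -
        (r ^ 3)⁻¹| ≤
      2 ^ ((3 : ℝ) / 2) * (rmax ^ 3)⁻¹ * binCoef (d + 1) *
        (((rmax / rmin) ^ 2 + 1) / 2) ^ ((d : ℝ) + 5 / 2) *
        Real.exp (-2 * (d + 1) / ((rmax / rmin) ^ 2 + 1)) := by
  have hr : 0 < r := h0.trans_le hr1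
  have hmax : 0 < rmax := h0.trans_le hle
  set A := (rmin ^ 2 + rmax ^ 2) / 2 with hA
  have hA0 : 0 < A := by positivity
  set q := 1 - rmin ^ 2 / A
  have hxq : |1 - r ^ 2 / A| ≤ q := abs_one_sub_div_midpoint_le (by positivity)
    (pow_le_pow_left₀ h0.le hr1 2) (pow_le_pow_left₀ hr.le hr2 2)
  have h1q : 1 - q = 2 / ((rmax / rmin) ^ 2 + 1) := by
    simp only [q, hA]; field_simp; ring
  have hexp : q ^ (d + 1) ≤ Real.exp (-2 * (d + 1) / ((rmax / rmin) ^ 2 + 1)) := by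
    convert pow_le_exp_neg_mul_one_sub ((abs_nonneg _).trans hxq) (d + 1) using 2
    rw [h1q]; push_cast; ring
  have hpow : (1 - q) ^ (-(d + 5 / 2) : ℝ) =
      (((rmax / rmin) ^ 2 + 1) / 2) ^ ((d : ℝ) + 5 / 2) := by
    rw [h1q, Real.rpow_neg (by positivity), ← Real.inv_rpow (by positivity), inv_div]
  have := binCoef_pos (d + 1)
  calc _ = (√A)⁻¹ ^ 3 * |∑ n ∈ range (d + 1), binCoef n * (1 - r ^ 2 / A) ^ n -
        (1 - (1 - r ^ 2 / A)) ^ (-3 / 2 : ℝ)| := by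
        rw [sub_sub_cancel, inv_pow_three_eq_inv_sqrt_pow_three_mul_rpow hr.le hA0, ← mul_sub,
          abs_mul, abs_of_nonneg (by positivity)]
    _ ≤ 2 ^ ((3 : ℝ) / 2) * (rmax ^ 3)⁻¹ *
          (binCoef (d + 1) * q ^ (d + 1) * (1 - q) ^ (-(d + 5 / 2) : ℝ)) :=
        mul_le_mul (inv_sqrt_pow_three_le hmax (by rw [hA]; nlinarith))
          (abs_sum_binCoef_mul_pow_sub_le hxq (sub_lt_self 1 (by positivity)) d)
          (abs_nonneg _) (by positivity)
    _ ≤ 2 ^ ((3 : ℝ) / 2) * (rmax ^ 3)⁻¹ * (binCoef (d + 1) *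
          Real.exp (-2 * (d + 1) / ((rmax / rmin) ^ 2 + 1)) *
          (((rmax / rmin) ^ 2 + 1) / 2) ^ ((d : ℝ) + 5 / 2)) := by
        rw [hpow]; gcongr
    _ = _ := by ring
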